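/- In model R, for every n ≥ 0 and s ≥ 1 the s-th moment has the closed form E(W_n^s) = (∏_{j=0}^{n−1} γ_{j,s}) · ( W_0^s + Σ_{ℓ=0}^{n−1} δ_{ℓ,s}/∏_{j=0}^{ℓ} γ_{j,s} ), where γ_{n,s} := Σ_{ℓ=0}^{s} c^ℓ·C(s,ℓ)·m^{(ℓ)}/T_n^ℓ and δ_{n,s} := Σ_{j=2}^{s} E(W_n^{s+1−j}) · Σ_{ℓ=j}^{s} C(s,ℓ)·c^ℓ·S(ℓ, ℓ+1−j)·m^{(ℓ+1−j)}/T_n^{ℓ+1−j}; equivalently, E(W_n^s) = γ_{n−1,s}·E(W_{n−1}^s) + δ_{n−1,s} for all n ≥ 1. -/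

import Mathlib

/-!
Given `W_n = w`, the number `K` of white balls among the `m` draws is binomial with parameters
`m` and `w / T_n`, and `W_{n+1} = w + c K`. Expanding `(w + c K)^s` by the binomial theorem and
each `K^ℓ` in falling factorials (Stirling numbers of the second kind), the factorial moments
`E K^{(i)} = m^{(i)} (w / T_n)^i` make `E(W_{n+1}^s)` a linear combination of the moments
`E(W_n^{s-ℓ+i})`, `i ≤ ℓ ≤ s`. The diagonal terms `i = ℓ` add up to `γ_{n,s} E(W_n^s)` and the
others to `δ_{n,s}`. As `γ_{n,s} ≥ 1`, this first-order linear recurrence is solved by the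
usual product formula.
-/

open Finset

/-- Total number of balls after `n` draws: `T_n = W_0 + B_0 + n·m·c`. -/
def urnT (W0 B0 m c n : ℕ) : ℕ := W0 + B0 + n * m * c

/-- Probability mass function of the number of white balls after `n` draws in
model `R` (at each step `m` balls are drawn one by one with replacement and, for
each drawn ball, `c` balls of the same color are added). -/
noncomputable def massR (W0 B0 m c : ℕ) : ℕ → ℕ → ℝ
  | 0 => fun v => if v = W0 then 1 else 0
  | n + 1 => fun v =>
      ∑ w ∈ Finset.range (urnT W0 B0 m c n + 1), ∑ k ∈ Finset.range (m + 1),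
        if v = w + c * k then
          massR W0 B0 m c n w *
            ((Nat.choose m k : ℝ) * (w : ℝ) ^ k *
                ((urnT W0 B0 m c n : ℝ) - (w : ℝ)) ^ (m - k) /
              (urnT W0 B0 m c n : ℝ) ^ m)
        else 0

/-- The `s`-th moment `E(W_n^s)` of the number of white balls in model `R`. -/
noncomputable def momR (W0 B0 m c s n : ℕ) : ℝ :=
  ∑ w ∈ Finset.range (urnT W0 B0 m c n + 1), massR W0 B0 m c n w * (w : ℝ) ^ s

/-- Stirling numbers of the second kind `S(n,k)`. -/
def stirling2 : ℕ → ℕ → ℕ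
  | 0, 0 => 1
  | 0, _ + 1 => 0
  | _ + 1, 0 => 0
  | n + 1, k + 1 => (k + 1) * stirling2 n (k + 1) + stirling2 n k

/-- The coefficient `γ_{n,s} = Σ_{ℓ=0}^{s} c^ℓ·C(s,ℓ)·m^{(ℓ)}/T_n^ℓ` of the moment
recurrence in model `R`. -/
noncomputable def gammaR (W0 B0 m c n s : ℕ) : ℝ :=
  ∑ ℓ ∈ Finset.range (s + 1),
    (c : ℝ) ^ ℓ * (Nat.choose s ℓ : ℝ) * (Nat.descFactorial m ℓ : ℝ) /
      (urnT W0 B0 m c n : ℝ) ^ ℓ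

/-- The inhomogeneous term
`δ_{n,s} = Σ_{j=2}^{s} E(W_n^{s+1−j})·Σ_{ℓ=j}^{s} C(s,ℓ)·c^ℓ·S(ℓ,ℓ+1−j)·m^{(ℓ+1−j)}/T_n^{ℓ+1−j}`
of the moment recurrence in model `R`. -/
noncomputable def deltaR (W0 B0 m c n s : ℕ) : ℝ :=
  ∑ j ∈ Finset.Icc 2 s, momR W0 B0 m c (s + 1 - j) n *
    ∑ ℓ ∈ Finset.Icc j s, (Nat.choose s ℓ : ℝ) * (c : ℝ) ^ ℓ *
      (stirling2 ℓ (ℓ + 1 - j) : ℝ) * (Nat.descFactorial m (ℓ + 1 - j) : ℝ) /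
      (urnT W0 B0 m c n : ℝ) ^ (ℓ + 1 - j)

theorem stirling2_eq_stirlingSecond : stirling2 = Nat.stirlingSecond := by
  funext n k
  induction n generalizing k with
  | zero => cases k <;> rfl
  | succ n ih =>
    cases k with
    | zero => rfl
    | succ k => simp only [stirling2, Nat.stirlingSecond_succ_succ, ih]

theorem Nat.mul_descFactorial_eq_descFactorial_succ_add (n i : ℕ) :
    n * n.descFactorial i = n.descFactorial (i + 1) + i * n.descFactorial i := by
  rcases le_or_gt i n with h | h
  · rw [Nat.descFactorial_succ, ← Nat.add_mul, Nat.sub_add_cancel h]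
  · simp [Nat.descFactorial_eq_zero_iff_lt.2 h]

theorem Nat.pow_eq_sum_stirlingSecond_mul_descFactorial (n x : ℕ) :
    x ^ n = ∑ i ∈ range (n + 1), Nat.stirlingSecond n i * x.descFactorial i := by
  induction n with
  | zero => simp
  | succ n ih =>
    have hshift : ∑ i ∈ range (n + 1), (i + 1) * Nat.stirlingSecond n (i + 1) *
        x.descFactorial (i + 1) = ∑ i ∈ range (n + 1), i * Nat.stirlingSecond n i *
        x.descFactorial i := by
      calc _ = ∑ i ∈ range (n + 2), i * Nat.stirlingSecond n i * x.descFactorial i := by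
            rw [sum_range_succ' (fun i => i * Nat.stirlingSecond n i * x.descFactorial i)]
            simp
        _ = _ := by
            rw [sum_range_succ, Nat.stirlingSecond_eq_zero_of_lt n.lt_succ_self]
            simp
    calc x ^ (n + 1)
        = ∑ i ∈ range (n + 1), Nat.stirlingSecond n i * (x * x.descFactorial i) := by
          rw [pow_succ, ih, sum_mul]
          exact sum_congr rfl fun i _ => by ring
      _ = ∑ i ∈ range (n + 1), (i + 1) * Nat.stirlingSecond n (i + 1) * x.descFactorial (i + 1)
          + ∑ i ∈ range (n + 1), Nat.stirlingSecond n i * x.descFactorial (i + 1) := by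
          simp_rw [hshift, Nat.mul_descFactorial_eq_descFactorial_succ_add, ← sum_add_distrib]
          exact sum_congr rfl fun i _ => by ring
      _ = ∑ i ∈ range (n + 2), Nat.stirlingSecond (n + 1) i * x.descFactorial i := by
          rw [sum_range_succ' (fun i => Nat.stirlingSecond (n + 1) i * x.descFactorial i),
            Nat.stirlingSecond_succ_zero, zero_mul, add_zero, ← sum_add_distrib]
          exact sum_congr rfl fun i _ => by rw [Nat.stirlingSecond_succ_succ]; ring

theorem Nat.choose_mul_descFactorial {n k i : ℕ} (hik : i ≤ k) :
    n.choose k * k.descFactorial i = n.descFactorial i * (n - i).choose (k - i) := by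
  rw [Nat.descFactorial_eq_factorial_mul_choose, Nat.descFactorial_eq_factorial_mul_choose,
    Nat.mul_left_comm, Nat.choose_mul hik, Nat.mul_assoc]

/-- The `i`-th factorial moment of the binomial distribution, in homogeneous form. -/
theorem sum_choose_mul_pow_mul_pow_mul_descFactorial {R : Type*} [CommSemiring R]
    (p q : R) (m i : ℕ) :
    ∑ k ∈ range (m + 1), (m.choose k : R) * p ^ k * q ^ (m - k) * (k.descFactorial i : R) =
      (m.descFactorial i : R) * p ^ i * (p + q) ^ (m - i) := by
  rcases lt_or_ge m i with hmi | him
  · rw [Nat.descFactorial_eq_zero_iff_lt.2 hmi, Nat.cast_zero, zero_mul, zero_mul]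
    refine sum_eq_zero fun k hk => ?_
    rw [Nat.descFactorial_eq_zero_iff_lt.2 (by grind), Nat.cast_zero, mul_zero]
  have hlow : ∀ k ∈ range i,
      (m.choose k : R) * p ^ k * q ^ (m - k) * (k.descFactorial i : R) = 0 := fun k hk => by
    rw [Nat.descFactorial_eq_zero_iff_lt.2 (mem_range.1 hk), Nat.cast_zero, mul_zero]
  rw [← sum_range_add_sum_Ico _ (by omega : i ≤ m + 1), sum_eq_zero hlow, zero_add,
    sum_Ico_eq_sum_range, show m + 1 - i = m - i + 1 by omega, add_pow, mul_sum]
  refine sum_congr rfl fun j hj => ?_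
  have key : ((m.choose (i + j) * (i + j).descFactorial i : ℕ) : R) =
      ((m.descFactorial i * (m - i).choose j : ℕ) : R) := by
    rw [Nat.choose_mul_descFactorial (Nat.le_add_right i j), Nat.add_sub_cancel_left]
  push_cast at key
  rw [show m - (i + j) = m - i - j by omega, pow_add]
  calc (m.choose (i + j) : R) * (p ^ i * p ^ j) * q ^ (m - i - j) * ((i + j).descFactorial i : R)
      = (m.choose (i + j) * (i + j).descFactorial i : R) * p ^ i * p ^ j * q ^ (m - i - j) := by
        ring
    _ = _ := by rw [key]; ring

theorem sum_choose_mul_pow_mul_pow_mul_pow {R : Type*} [CommSemiring R] (p q : R) (m ℓ : ℕ) :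
    ∑ k ∈ range (m + 1), (m.choose k : R) * p ^ k * q ^ (m - k) * (k : R) ^ ℓ =
      ∑ i ∈ range (ℓ + 1),
        (Nat.stirlingSecond ℓ i : R) * ((m.descFactorial i : R) * p ^ i * (p + q) ^ (m - i)) := by
  have hpow : ∀ k : ℕ, (k : R) ^ ℓ =
      ∑ i ∈ range (ℓ + 1), (Nat.stirlingSecond ℓ i : R) * (k.descFactorial i : R) := fun k => by
    rw [← Nat.cast_pow, Nat.pow_eq_sum_stirlingSecond_mul_descFactorial]
    push_cast
    rfl
  simp_rw [hpow, mul_sum]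
  rw [sum_comm]
  refine sum_congr rfl fun i _ => ?_
  rw [← sum_choose_mul_pow_mul_pow_mul_descFactorial, mul_sum]
  exact sum_congr rfl fun k _ => by ring

theorem Nat.cast_descFactorial_mul_pow_sub_div_pow {K : Type*} [Field K] {T : K} (hT : T ≠ 0)
    (m i : ℕ) : (m.descFactorial i : K) * T ^ (m - i) / T ^ m = m.descFactorial i / T ^ i := by
  rcases le_or_gt i m with him | hmi
  · rw [pow_sub₀ T hT him]
    field_simp
  · simp [Nat.descFactorial_eq_zero_iff_lt.2 hmi]

/-- Coefficient of `E(W_n^{s-ℓ+i})` in `E(W_{n+1}^s)`: `ℓ` indexes the binomial expansion of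
`(W_n + c K)^s`, and `i` the expansion of `K^ℓ` in falling factorials. -/
noncomputable def stepCoeff (m s : ℕ) (c T : ℝ) (ℓ i : ℕ) : ℝ :=
  (s.choose ℓ : ℝ) * c ^ ℓ * (Nat.stirlingSecond ℓ i : ℝ) * (m.descFactorial i : ℝ) / T ^ i

theorem stepCoeff_zero_right {m s ℓ : ℕ} (c T : ℝ) (hℓ : ℓ ≠ 0) : stepCoeff m s c T ℓ 0 = 0 := by
  obtain ⟨ℓ, rfl⟩ := Nat.exists_eq_succ_of_ne_zero hℓ
  simp [stepCoeff]

theorem sum_binomial_mul_add_mul_pow {T : ℝ} (hT : T ≠ 0) (w c : ℝ) (m s : ℕ) :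
    ∑ k ∈ range (m + 1), (m.choose k : ℝ) * w ^ k * (T - w) ^ (m - k) / T ^ m * (w + c * k) ^ s =
      ∑ ℓ ∈ range (s + 1), ∑ i ∈ range (ℓ + 1), stepCoeff m s c T ℓ i * w ^ (s - ℓ + i) := by
  simp_rw [add_comm w, add_pow, mul_sum]
  rw [sum_comm]
  refine sum_congr rfl fun ℓ _ => ?_
  have hmoment := sum_choose_mul_pow_mul_pow_mul_pow w (T - w) m ℓ
  rw [add_sub_cancel] at hmoment
  calc ∑ k ∈ range (m + 1), (m.choose k : ℝ) * w ^ k * (T - w) ^ (m - k) / T ^ m *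
        ((c * k) ^ ℓ * w ^ (s - ℓ) * (s.choose ℓ : ℝ))
      = (s.choose ℓ : ℝ) * c ^ ℓ * w ^ (s - ℓ) / T ^ m *
          ∑ k ∈ range (m + 1), (m.choose k : ℝ) * w ^ k * (T - w) ^ (m - k) * (k : ℝ) ^ ℓ := by
        rw [mul_sum]
        exact sum_congr rfl fun k _ => by ring
    _ = _ := by
        rw [hmoment, mul_sum]
        refine sum_congr rfl fun i _ => ?_
        have hdiv := Nat.cast_descFactorial_mul_pow_sub_div_pow hT m i
        rw [stepCoeff, pow_add]
        linear_combination ((s.choose ℓ : ℝ) * c ^ ℓ * (Nat.stirlingSecond ℓ i : ℝ) * w ^ (s - ℓ) *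
          w ^ i) * hdiv

section ModelR

variable (W0 B0 m c : ℕ)

theorem urnT_succ (n : ℕ) : urnT W0 B0 m c (n + 1) = urnT W0 B0 m c n + m * c := by
  simp only [urnT]
  ring

theorem urnT_pos (hW0 : 1 ≤ W0) (n : ℕ) : 0 < urnT W0 B0 m c n := by
  unfold urnT
  omega

theorem sum_massR_succ_mul (n : ℕ) (f : ℕ → ℝ) :
    ∑ v ∈ range (urnT W0 B0 m c (n + 1) + 1), massR W0 B0 m c (n + 1) v * f v =
      ∑ w ∈ range (urnT W0 B0 m c n + 1), massR W0 B0 m c n w *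
        ∑ k ∈ range (m + 1), (m.choose k : ℝ) * w ^ k * (urnT W0 B0 m c n - w) ^ (m - k) /
          (urnT W0 B0 m c n : ℝ) ^ m * f (w + c * k) := by
  simp only [massR, sum_mul, ite_mul, zero_mul, mul_sum]
  rw [sum_comm]
  refine sum_congr rfl fun w hw => ?_
  rw [sum_comm]
  refine sum_congr rfl fun k hk => ?_
  have hmem : w + c * k ∈ range (urnT W0 B0 m c (n + 1) + 1) := by
    have : c * k ≤ m * c := by rw [mul_comm]; exact Nat.mul_le_mul_right c (by simpa using hk)
    simp only [mem_range, urnT_succ] at hw ⊢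
    omega
  rw [sum_ite_eq' _ _ (fun v => massR W0 B0 m c n w * _ * f v), if_pos hmem]
  ring

theorem momR_zero (s : ℕ) : momR W0 B0 m c s 0 = (W0 : ℝ) ^ s := by
  simp only [momR, massR, ite_mul, one_mul, zero_mul]
  rw [sum_ite_eq' _ W0 (fun w => (w : ℝ) ^ s), if_pos (by simp [urnT])]

theorem momR_succ (hW0 : 1 ≤ W0) (s n : ℕ) :
    momR W0 B0 m c s (n + 1) = ∑ ℓ ∈ range (s + 1), ∑ i ∈ range (ℓ + 1),
      stepCoeff m s c (urnT W0 B0 m c n) ℓ i * momR W0 B0 m c (s - ℓ + i) n := by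
  have hT : (urnT W0 B0 m c n : ℝ) ≠ 0 := by exact_mod_cast (urnT_pos W0 B0 m c hW0 n).ne'
  have hcast : ∀ w k : ℕ, ((w + c * k : ℕ) : ℝ) = (w : ℝ) + c * k := fun w k => by push_cast; rfl
  unfold momR
  simp_rw [sum_massR_succ_mul, hcast, sum_binomial_mul_add_mul_pow hT, mul_sum]
  rw [sum_comm]
  refine sum_congr rfl fun ℓ _ => ?_
  rw [sum_comm]
  exact sum_congr rfl fun i _ => sum_congr rfl fun w _ => by ring

theorem gammaR_eq_sum_stepCoeff (n s : ℕ) :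
    gammaR W0 B0 m c n s = ∑ ℓ ∈ range (s + 1), stepCoeff m s c (urnT W0 B0 m c n) ℓ ℓ := by
  refine sum_congr rfl fun ℓ _ => ?_
  rw [stepCoeff, Nat.stirlingSecond_self]
  ring

theorem deltaR_eq_sum_stepCoeff (n s : ℕ) :
    deltaR W0 B0 m c n s = ∑ ℓ ∈ range (s + 1), ∑ i ∈ range ℓ,
      stepCoeff m s c (urnT W0 B0 m c n) ℓ i * momR W0 B0 m c (s - ℓ + i) n := by
  have hdrop : ∀ ℓ, ∑ i ∈ range ℓ,
      stepCoeff m s c (urnT W0 B0 m c n) ℓ i * momR W0 B0 m c (s - ℓ + i) n =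
      ∑ i ∈ Ico 1 ℓ, stepCoeff m s c (urnT W0 B0 m c n) ℓ i * momR W0 B0 m c (s - ℓ + i) n :=
    fun ℓ => by
      rcases Nat.eq_zero_or_pos ℓ with rfl | hℓ
      · rfl
      · rw [sum_range_eq_add_Ico _ hℓ, stepCoeff_zero_right _ _ hℓ.ne', zero_mul, zero_add]
  simp_rw [hdrop, deltaR, stirling2_eq_stirlingSecond, mul_sum]
  rw [sum_sigma', sum_sigma']
  -- `j = ℓ + 1 - i` is the paper's index
  refine sum_nbij' (fun x => ⟨x.2, x.2 + 1 - x.1⟩) (fun x => ⟨x.1 + 1 - x.2, x.1⟩) ?_ ?_ ?_ ?_ ?_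
  all_goals
    simp only [mem_sigma, mem_Icc, mem_Ico, mem_range, Sigma.forall, Sigma.mk.injEq, heq_eq_eq,
      and_imp, and_true, true_and]
  · intro j ℓ _ _ _ _; omega
  · intro ℓ i _ _ _; omega
  · intro j ℓ _ _ _ _; omega
  · intro ℓ i _ _ _; omega
  intro j ℓ _ _ hjℓ _
  simp only [stepCoeff, show s - ℓ + (ℓ + 1 - j) = s + 1 - j by omega]
  ring

theorem momR_succ_eq_gammaR_mul_add_deltaR (hW0 : 1 ≤ W0) (n s : ℕ) :
    momR W0 B0 m c s (n + 1) =
      gammaR W0 B0 m c n s * momR W0 B0 m c s n + deltaR W0 B0 m c n s := by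
  rw [momR_succ W0 B0 m c hW0, gammaR_eq_sum_stepCoeff, deltaR_eq_sum_stepCoeff, sum_mul,
    ← sum_add_distrib]
  refine sum_congr rfl fun ℓ hℓ => ?_
  rw [sum_range_succ, Nat.sub_add_cancel (Nat.lt_succ_iff.1 (mem_range.1 hℓ)), add_comm]

theorem one_le_gammaR (n s : ℕ) : 1 ≤ gammaR W0 B0 m c n s := by
  rw [gammaR, sum_range_succ']
  simp only [pow_zero, Nat.choose_zero_right, Nat.descFactorial_zero, Nat.cast_one, mul_one,
    div_one]
  exact le_add_of_nonneg_left (sum_nonneg fun _ _ => by positivity)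

end ModelR

theorem eq_prod_mul_add_sum_div_prod_of_succ {K : Type*} [Field K] {a g d : ℕ → K}
    (hg : ∀ n, g n ≠ 0) (h : ∀ n, a (n + 1) = g n * a n + d n) (n : ℕ) :
    a n = (∏ j ∈ range n, g j) * (a 0 + ∑ ℓ ∈ range n, d ℓ / ∏ j ∈ range (ℓ + 1), g j) := by
  induction n with
  | zero => simp
  | succ n ih =>
    have hprod : ∏ j ∈ range n, g j ≠ 0 := prod_ne_zero_iff.2 fun j _ => hg j
    rw [h, ih, sum_range_succ, prod_range_succ]
    field_simp [hg n]
    ring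

theorem modelR_moment_closedForm_general (W0 B0 m c : ℕ) (hW0 : 1 ≤ W0) :
    (∀ n s : ℕ, 1 ≤ s →
      momR W0 B0 m c s n =
        (∏ j ∈ Finset.range n, gammaR W0 B0 m c j s) *
          ((W0 : ℝ) ^ s + ∑ ℓ ∈ Finset.range n,
            deltaR W0 B0 m c ℓ s / ∏ j ∈ Finset.range (ℓ + 1), gammaR W0 B0 m c j s)) ∧
    (∀ n s : ℕ, 1 ≤ n → 1 ≤ s →
      momR W0 B0 m c s n =
        gammaR W0 B0 m c (n - 1) s * momR W0 B0 m c s (n - 1) + deltaR W0 B0 m c (n - 1) s) := by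
  have hrec := momR_succ_eq_gammaR_mul_add_deltaR W0 B0 m c hW0
  refine ⟨fun n s _ => ?_, fun n s hn _ => ?_⟩
  · have hgamma : ∀ j, gammaR W0 B0 m c j s ≠ 0 := fun j =>
      (zero_lt_one.trans_le (one_le_gammaR W0 B0 m c j s)).ne'
    rw [eq_prod_mul_add_sum_div_prod_of_succ hgamma (fun n => hrec n s) n, momR_zero]
  · obtain ⟨n, rfl⟩ := Nat.exists_eq_add_of_le' hn
    exact hrec n s

/-- In model `R`, the closed form
`E(W_n^s) = (∏_{j<n} γ_{j,s})·(W_0^s + Σ_{ℓ<n} δ_{ℓ,s}/∏_{j≤ℓ} γ_{j,s})`; equivalently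
the recurrence `E(W_n^s) = γ_{n−1,s}·E(W_{n−1}^s) + δ_{n−1,s}` for `n ≥ 1`. -/
theorem modelR_moment_closedForm (W0 B0 m c : ℕ) (hm : 1 ≤ m) (hc : 1 ≤ c)
    (hW0 : 1 ≤ W0) (hB0 : 1 ≤ B0) (hT0 : m ≤ W0 + B0) :
    (∀ n s : ℕ, 1 ≤ s →
      momR W0 B0 m c s n =
        (∏ j ∈ Finset.range n, gammaR W0 B0 m c j s) *
          ((W0 : ℝ) ^ s + ∑ ℓ ∈ Finset.range n,
            deltaR W0 B0 m c ℓ s / ∏ j ∈ Finset.range (ℓ + 1), gammaR W0 B0 m c j s)) ∧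
    (∀ n s : ℕ, 1 ≤ n → 1 ≤ s →
      momR W0 B0 m c s n =
        gammaR W0 B0 m c (n - 1) s * momR W0 B0 m c s (n - 1) + deltaR W0 B0 m c (n - 1) s) :=
  modelR_moment_closedForm_general W0 B0 m c hW0
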